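/- arXiv:1307.6426 — 4 statements merged into one kernel-verified Lean document; each statement's English description precedes it below -/
import Mathlib

section
/- The KKT ideal is the elimination of the variables s from the gradient ideal: I_KKT = I_grad ∩ ℝ[x, u, v], i.e. the ideal of ℝ[x,u,v] generated by F_1,…,F_n, g_1^0,…,g_{n1}^0, v_1 g_1^+,…,v_{n2} g_{n2}^+ equals the preimage of I_grad under the natural inclusion ℝ[x,u,v] → ℝ[x,u,v,s]. -/
open MvPolynomial

noncomputable section

/-- Variables z = (x, u, v, s). -/
abbrev VarsZ (n n1 n2 : ℕ) := Fin n ⊕ (Fin n1 ⊕ (Fin n2 ⊕ Fin n2))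
/-- Variables y = (x, u, v). -/
abbrev VarsY (n n1 n2 : ℕ) := Fin n ⊕ (Fin n1 ⊕ Fin n2)

variable {n n1 n2 : ℕ}

/-- F_k = ∂f/∂x_k − Σ u_i ∂g_i^0/∂x_k − Σ v_j ∂g_j^+/∂x_k, as a polynomial in y = (x,u,v). -/
def Fy (f : MvPolynomial (Fin n) ℝ) (g0 : Fin n1 → MvPolynomial (Fin n) ℝ)
    (gp : Fin n2 → MvPolynomial (Fin n) ℝ) (k : Fin n) : MvPolynomial (VarsY n n1 n2) ℝ :=
  rename Sum.inl (pderiv k f)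
    - ∑ i, X (Sum.inr (Sum.inl i)) * rename Sum.inl (pderiv k (g0 i))
    - ∑ j, X (Sum.inr (Sum.inr j)) * rename Sum.inl (pderiv k (gp j))

/-- The KKT ideal I_KKT ⊆ ℝ[x,u,v]. -/
def IKKT (f : MvPolynomial (Fin n) ℝ) (g0 : Fin n1 → MvPolynomial (Fin n) ℝ)
    (gp : Fin n2 → MvPolynomial (Fin n) ℝ) : Ideal (MvPolynomial (VarsY n n1 n2) ℝ) :=
  Ideal.span (Set.range (Fy f g0 gp)
    ∪ Set.range (fun i => (rename Sum.inl (g0 i) : MvPolynomial (VarsY n n1 n2) ℝ))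
    ∪ Set.range (fun j => X (Sum.inr (Sum.inr j)) * rename Sum.inl (gp j)))

/-- F_k regarded as a polynomial in z = (x,u,v,s). -/
def Fz (f : MvPolynomial (Fin n) ℝ) (g0 : Fin n1 → MvPolynomial (Fin n) ℝ)
    (gp : Fin n2 → MvPolynomial (Fin n) ℝ) (k : Fin n) : MvPolynomial (VarsZ n n1 n2) ℝ :=
  rename Sum.inl (pderiv k f)
    - ∑ i, X (Sum.inr (Sum.inl i)) * rename Sum.inl (pderiv k (g0 i))
    - ∑ j, X (Sum.inr (Sum.inr (Sum.inl j))) * rename Sum.inl (pderiv k (gp j))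

/-- The gradient ideal I_grad ⊆ ℝ[x,u,v,s]. -/
def Igrad (f : MvPolynomial (Fin n) ℝ) (g0 : Fin n1 → MvPolynomial (Fin n) ℝ)
    (gp : Fin n2 → MvPolynomial (Fin n) ℝ) : Ideal (MvPolynomial (VarsZ n n1 n2) ℝ) :=
  Ideal.span (Set.range (Fz f g0 gp)
    ∪ Set.range (fun i => (rename Sum.inl (g0 i) : MvPolynomial (VarsZ n n1 n2) ℝ))
    ∪ Set.range (fun j => (rename Sum.inl (gp j) : MvPolynomial (VarsZ n n1 n2) ℝ)
        - X (Sum.inr (Sum.inr (Sum.inr j))) ^ 2)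
    ∪ Set.range (fun j => (X (Sum.inr (Sum.inr (Sum.inl j))) : MvPolynomial (VarsZ n n1 n2) ℝ)
        * X (Sum.inr (Sum.inr (Sum.inr j)))))

/-- The natural inclusion ℝ[x,u,v] → ℝ[x,u,v,s]. -/
def incYZ : MvPolynomial (VarsY n n1 n2) ℝ →ₐ[ℝ] MvPolynomial (VarsZ n n1 n2) ℝ :=
  rename (Sum.map id (Sum.map id Sum.inl))

/-! Writing `s_j` for the slack variables, `v g = v (g - s²) + (v s) s` gives `I_KKT ⊆ I_grad`.
Conversely, modulo `s_j² - g_j` the ring `ℝ[x,u,v,s]` is free over `ℝ[x,u,v]` on the squarefree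
monomials in `s`, and taking the coefficient of `1` is an `ℝ[x,u,v]`-linear retraction of the
inclusion. It sends `s_j² q` to `g_j` times the image of `q`, and `s_j q` into `(g_j)`, hence
`v_j s_j q` into `(v_j g_j)`; so it maps `I_grad` into `I_KKT`. -/

theorem Ideal.apply_mem_of_mem_span {R M F S : Type*} [CommSemiring R] [AddCommMonoid M]
    [FunLike F R M] [AddMonoidHomClass F R M] [SetLike S M] [AddSubmonoidClass S M]
    (L : F) (K : S) {T : Set R} (hT : ∀ x ∈ T, ∀ q, L (q * x) ∈ K) {x : R}
    (hx : x ∈ Ideal.span T) : L x ∈ K := by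
  suffices ∀ q, L (q * x) ∈ K by simpa using this 1
  induction hx using Submodule.span_induction with
  | mem x hx => exact hT x hx
  | zero => simp
  | add x y _ _ hx hy => intro q; rw [mul_add, map_add]; exact add_mem (hx q) (hy q)
  | smul r x _ hx => intro q; rw [smul_eq_mul, ← mul_assoc]; exact hx (q * r)

namespace MvPolynomial

variable {A ι : Type*} [CommRing A] (g : ι → A)

def evenPow (j : ι) (k : ℕ) : A := if Even k then g j ^ (k / 2) else 0

lemma evenPow_zero (j : ι) : evenPow g j 0 = 1 := by simp [evenPow]

lemma evenPow_add_two (j : ι) (k : ℕ) : evenPow g j (k + 2) = g j * evenPow g j k := by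
  simp only [evenPow, Nat.even_add, even_two, iff_true, Nat.add_div_right k two_pos, pow_succ']
  split_ifs <;> simp

lemma dvd_evenPow_add_one (j : ι) (k : ℕ) : g j ∣ evenPow g j (k + 1) := by
  unfold evenPow
  split_ifs with hk
  · obtain ⟨m, hm⟩ := hk
    exact dvd_pow_self _ (by omega)
  · exact dvd_zero _

lemma prod_evenPow_add_single (α : ι →₀ ℕ) (j : ι) (m : ℕ) :
    (α + Finsupp.single j m).prod (evenPow g) =
      evenPow g j (α j + m) * (α.erase j).prod (evenPow g) := by
  rw [← Finsupp.mul_prod_erase' _ j _ (evenPow_zero g), Finsupp.add_apply, Finsupp.single_eq_same,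
    Finsupp.erase_add, Finsupp.erase_single, add_zero]

lemma prod_evenPow_add_single_two (α : ι →₀ ℕ) (j : ι) :
    (α + Finsupp.single j 2).prod (evenPow g) = g j * α.prod (evenPow g) := by
  rw [prod_evenPow_add_single, evenPow_add_two, ← Finsupp.mul_prod_erase' α j _ (evenPow_zero g),
    mul_assoc]

lemma dvd_prod_evenPow_add_single_one (α : ι →₀ ℕ) (j : ι) :
    g j ∣ (α + Finsupp.single j 1).prod (evenPow g) := by
  rw [prod_evenPow_add_single]
  exact (dvd_evenPow_add_one g j _).mul_right _

/-- The coefficient of `1` of the image of a polynomial in `A[X]/(X_j² - g_j)`, which is a free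
`A`-module on the squarefree monomials. -/
def evenEval : MvPolynomial ι A →ₗ[A] A :=
  (basisMonomials ι A).constr A fun α => α.prod (evenPow g)

lemma evenEval_monomial (α : ι →₀ ℕ) (a : A) :
    evenEval g (monomial α a) = a * α.prod (evenPow g) := by
  have h : evenEval g (monomial α 1) = α.prod (evenPow g) := by
    simpa [evenEval] using (basisMonomials ι A).constr_basis A (fun α => α.prod (evenPow g)) α
  rw [← h, ← smul_eq_mul, ← map_smul, smul_monomial, smul_eq_mul, mul_one]

lemma evenEval_C (a : A) : evenEval g (C a) = a := by
  rw [← monomial_zero', evenEval_monomial, Finsupp.prod_zero_index, mul_one]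

lemma evenEval_X_sq_mul (j : ι) (q : MvPolynomial ι A) :
    evenEval g (X j ^ 2 * q) = g j * evenEval g q := by
  induction q using MvPolynomial.induction_on' with
  | monomial α a =>
    rw [X_pow_eq_monomial, monomial_mul, one_mul, add_comm, evenEval_monomial, evenEval_monomial,
      prod_evenPow_add_single_two, mul_left_comm]
  | add p q hp hq => rw [mul_add, map_add, map_add, hp, hq, mul_add]

lemma dvd_evenEval_X_mul (j : ι) (q : MvPolynomial ι A) : g j ∣ evenEval g (X j * q) := by
  induction q using MvPolynomial.induction_on' with
  | monomial α a =>
    rw [X, monomial_mul, one_mul, add_comm, evenEval_monomial]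
    exact (dvd_prod_evenPow_add_single_one g α j).mul_left a
  | add p q hp hq => rw [mul_add, map_add]; exact dvd_add hp hq

theorem comap_C_span_sub_X_sq_mul_X (S : Set A) (w : ι → A) :
    (Ideal.span (C '' S ∪ Set.range (fun j => C (g j) - X j ^ 2)
      ∪ Set.range (fun j => C (w j) * X j))).comap C =
      Ideal.span (S ∪ Set.range fun j => w j * g j) := by
  set K := Ideal.span (S ∪ Set.range fun j => w j * g j)
  refine le_antisymm (fun p hp => ?_) (Ideal.span_le.2 ?_)
  · rw [← evenEval_C g p]
    refine Ideal.apply_mem_of_mem_span (evenEval g) K ?_ hp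
    rintro x ((⟨s, hs, rfl⟩ | ⟨j, rfl⟩) | ⟨j, rfl⟩) q
    · rw [mul_comm, C_mul', map_smul, smul_eq_mul]
      exact K.mul_mem_right _ (Ideal.subset_span (Or.inl hs))
    · rw [show q * (C (g j) - X j ^ 2) = g j • q - X j ^ 2 * q by rw [← C_mul']; ring,
        map_sub, map_smul, evenEval_X_sq_mul, smul_eq_mul, sub_self]
      exact K.zero_mem
    · obtain ⟨r, hr⟩ := dvd_evenEval_X_mul g j q
      rw [show q * (C (w j) * X j) = w j • (X j * q) by rw [← C_mul']; ring,
        map_smul, hr, smul_eq_mul, ← mul_assoc]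
      exact K.mul_mem_right _ (Ideal.subset_span (Or.inr ⟨j, rfl⟩))
  · rintro x (hs | ⟨j, rfl⟩)
    · exact Ideal.subset_span (Or.inl (Or.inl ⟨x, hs, rfl⟩))
    · have hw : C (w j * g j) = C (w j) * (C (g j) - X j ^ 2) + (C (w j) * X j) * X j := by
        rw [C_mul]; ring
      rw [SetLike.mem_coe, Ideal.mem_comap, hw]
      exact add_mem (Ideal.mul_mem_left _ _ (Ideal.subset_span (Or.inl (Or.inr ⟨j, rfl⟩))))
        (Ideal.mul_mem_right _ _ (Ideal.subset_span (Or.inr ⟨j, rfl⟩)))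

end MvPolynomial

def slackVarsEquiv : Fin n2 ⊕ VarsY n n1 n2 ≃ VarsZ n n1 n2 :=
  (Equiv.sumComm _ _).trans <| (Equiv.sumAssoc _ _ _).trans <|
    Equiv.sumCongr (Equiv.refl _) (Equiv.sumAssoc _ _ _)

def slackAlgEquiv :
    MvPolynomial (Fin n2) (MvPolynomial (VarsY n n1 n2) ℝ) ≃ₐ[ℝ] MvPolynomial (VarsZ n n1 n2) ℝ :=
  (sumAlgEquiv ℝ (Fin n2) (VarsY n n1 n2)).symm.trans (renameEquiv ℝ slackVarsEquiv)

lemma slackAlgEquiv_C (p : MvPolynomial (VarsY n n1 n2) ℝ) : slackAlgEquiv (C p) = incYZ p := by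
  induction p using MvPolynomial.induction_on with
  | C a => simp [slackAlgEquiv, incYZ]
  | add p q hp hq => rw [C_add, map_add, map_add, hp, hq]
  | mul_X p y hp =>
    rw [C_mul, map_mul, map_mul, hp]
    rcases y with x | u | v <;> simp [slackAlgEquiv, slackVarsEquiv, incYZ]

lemma slackAlgEquiv_X (j : Fin n2) :
    slackAlgEquiv (X j : MvPolynomial (Fin n2) (MvPolynomial (VarsY n n1 n2) ℝ)) =
      X (Sum.inr (Sum.inr (Sum.inr j))) := by
  simp [slackAlgEquiv, slackVarsEquiv]

lemma incYZ_rename_inl (p : MvPolynomial (Fin n) ℝ) :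
    incYZ (n1 := n1) (n2 := n2) (rename Sum.inl p) = rename Sum.inl p := by
  rw [incYZ, rename_rename]
  rfl

lemma incYZ_X (y : VarsY n n1 n2) : incYZ (X y) = X (Sum.map id (Sum.map id Sum.inl) y) :=
  rename_X _ _

lemma incYZ_Fy (f : MvPolynomial (Fin n) ℝ) (g0 : Fin n1 → MvPolynomial (Fin n) ℝ)
    (gp : Fin n2 → MvPolynomial (Fin n) ℝ) (k : Fin n) : incYZ (Fy f g0 gp k) = Fz f g0 gp k := by
  simp only [Fy, Fz, map_sub, map_sum, map_mul, incYZ_rename_inl, incYZ_X, Sum.map_inr,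
    Sum.map_inl, id]

lemma comap_incYZ_map_slackAlgEquiv
    (I : Ideal (MvPolynomial (Fin n2) (MvPolynomial (VarsY n n1 n2) ℝ))) :
    (I.map slackAlgEquiv).comap incYZ = I.comap C := by
  ext p
  rw [Ideal.mem_comap, ← slackAlgEquiv_C, ← Ideal.mem_comap,
    Ideal.comap_map_of_bijective _ slackAlgEquiv.bijective, Ideal.mem_comap]

lemma Igrad_eq_map_slackAlgEquiv (f : MvPolynomial (Fin n) ℝ)
    (g0 : Fin n1 → MvPolynomial (Fin n) ℝ) (gp : Fin n2 → MvPolynomial (Fin n) ℝ) :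
    Igrad f g0 gp = (Ideal.span
      (C '' (Set.range (Fy f g0 gp) ∪ Set.range fun i => rename Sum.inl (g0 i))
        ∪ Set.range (fun j => C (rename Sum.inl (gp j)) - X j ^ 2)
        ∪ Set.range (fun j => C (X (Sum.inr (Sum.inr j))) * X j))).map slackAlgEquiv := by
  rw [Ideal.map_span, Igrad]
  simp only [Set.image_union, ← Set.range_comp]
  congr 4 <;> ext <;> simp [slackAlgEquiv_C, slackAlgEquiv_X, incYZ_Fy, incYZ_rename_inl, incYZ_X]

/-- The KKT ideal is the elimination of the variables `s` from the
gradient ideal: `I_KKT = I_grad ∩ ℝ[x,u,v]`, i.e. the preimage of `I_grad` under the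
natural inclusion `ℝ[x,u,v] → ℝ[x,u,v,s]`. -/
theorem IKKT_eq_comap_Igrad (f : MvPolynomial (Fin n) ℝ)
    (g0 : Fin n1 → MvPolynomial (Fin n) ℝ) (gp : Fin n2 → MvPolynomial (Fin n) ℝ) :
    IKKT f g0 gp = Ideal.comap (incYZ (n := n) (n1 := n1) (n2 := n2)) (Igrad f g0 gp) := by
  rw [IKKT, Igrad_eq_map_slackAlgEquiv, comap_incYZ_map_slackAlgEquiv,
    MvPolynomial.comap_C_span_sub_X_sq_mul_X]

end
end

section
/- In the setting of the decomposition J = J_0 ∩ ⋯ ∩ J_s, there exist polynomials p_0, …, p_s ∈ ℂ[x_1,…,x_n] such that 1 − Σ_{i=0}^s p_i lies in the extension of J to ℂ[z], p_i ∈ ∩_{j≠i} (extension of J_j to ℂ[z]) for each i, and p_i has real coefficients (p_i ∈ ℝ[x_1,…,x_n]) for i = 0, …, r. -/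
/-!
On each component `V(J_j)` the polynomial `f - f_j` vanishes, so by the Nullstellensatz
`(f - f_j)^N` lies in the extension of `J_j` to `ℂ[z]`, for one `N` serving all `j`.
Since the values `f_j` are distinct, the univariate polynomials
`L_i = ∏_{j ≠ i} (t - f_j)^N` have no common root, hence `∑ ν_i L_i = 1` for some `ν_i ∈ ℂ[t]`,
and `p_i = (ν_i L_i)(f)` satisfies the first two conditions. Complex conjugation permutes
the `L_i` as it permutes the values `f_i`; averaging `ν` with its conjugate reindexed by
this permutation makes `ν_i L_i`, and hence `p_i`, real whenever `f_i` is real.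
-/

open MvPolynomial

noncomputable section

variable {n n1 n2 : ℕ}

/-- Evaluation of a real polynomial at a complex point. -/
def evalC {σ : Type*} (p : MvPolynomial σ ℝ) (x : σ → ℂ) : ℂ :=
  eval x (MvPolynomial.map (algebraMap ℝ ℂ) p)

/-- Complex zero set of an ideal of a real polynomial ring. -/
def cZeros {σ : Type*} (I : Ideal (MvPolynomial σ ℝ)) : Set (σ → ℂ) :=
  {z | ∀ p ∈ I, eval z (MvPolynomial.map (algebraMap ℝ ℂ) p) = 0}

/-- Extension of an ideal of ℝ[z] to ℂ[z]. -/
def extC {σ : Type*} (I : Ideal (MvPolynomial σ ℝ)) : Ideal (MvPolynomial σ ℂ) :=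
  Ideal.map (MvPolynomial.map (algebraMap ℝ ℂ) : MvPolynomial σ ℝ →+* MvPolynomial σ ℂ) I


theorem Function.Injective.exists_involutive_comp_eq {ι α : Type*} {c : ι → α}
    (hc : Function.Injective c) {τ : α → α} (hτ : Function.Involutive τ)
    (h : ∀ i, ∃ j, c j = τ (c i)) :
    ∃ σ : ι → ι, Function.Involutive σ ∧ ∀ i, c (σ i) = τ (c i) := by
  choose σ hσ using h
  exact ⟨σ, fun i => hc (by rw [hσ, hσ, hτ]), hσ⟩

theorem Ideal.exists_pow_mem_of_forall_mem_radical {R ι : Type*} [CommSemiring R] [Fintype ι]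
    {I : ι → Ideal R} {g : ι → R} (h : ∀ i, g i ∈ (I i).radical) :
    ∃ N, ∀ i, g i ^ N ∈ I i := by
  choose N hN using h
  exact ⟨Finset.univ.sup N, fun i =>
    (I i).pow_mem_of_pow_mem (hN i) (Finset.le_sup (Finset.mem_univ i))⟩

theorem exists_sum_mul_eq_one_of_map_eq {R ι : Type*} [CommRing R] [Algebra ℚ R] [Fintype ι]
    (τ : R →+* R) (hτ : Function.Involutive τ) {σ : ι → ι} (hσ : Function.Involutive σ)
    {h : ι → R} (hτh : ∀ i, τ (h i) = h (σ i)) {μ : ι → R} (hμ : ∑ i, μ i * h i = 1) :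
    ∃ ν : ι → R, ∑ i, ν i * h i = 1 ∧ ∀ i, τ (ν i) = ν (σ i) := by
  have hμτ : ∑ i, τ (μ (σ i)) * h i = 1 :=
    calc ∑ i, τ (μ (σ i)) * h i = ∑ i, τ (μ (σ (σ i))) * h (σ i) :=
          Equiv.sum_comp (hσ.toPerm σ) (fun i => τ (μ (σ i)) * h i) |>.symm
      _ = τ (∑ i, μ i * h i) := by simp only [hσ _, map_sum, map_mul, hτh]
      _ = 1 := by rw [hμ, map_one]
  refine ⟨fun i => (1 / 2 : ℚ) • (μ i + τ (μ (σ i))), ?_, fun i => ?_⟩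
  · simp only [smul_mul_assoc, ← Finset.smul_sum, add_mul, Finset.sum_add_distrib, hμ, hμτ]
    rw [smul_add, ← add_smul, add_halves, one_smul]
  · simp only [map_rat_smul, map_add, hσ i, hτ _, add_comm]

namespace Polynomial

variable {K ι : Type*} [Field K] [Fintype ι] [DecidableEq ι]

def lagrangeFactor (c : ι → K) (N : ℕ) (i : ι) : K[X] :=
  ∏ j ∈ {i}ᶜ, (X - C (c j)) ^ N

theorem exists_sum_mul_lagrangeFactor_eq_one [Nonempty ι] {c : ι → K}
    (hc : Function.Injective c) (N : ℕ) :
    ∃ μ : ι → K[X], ∑ i, μ i * lagrangeFactor c N i = 1 :=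
  exists_sum_eq_one_iff_pairwise_coprime'.2 fun _ _ hij => (pairwise_coprime_X_sub_C hc hij).pow

theorem pow_dvd_lagrangeFactor (c : ι → K) (N : ℕ) {i j : ι} (hji : j ≠ i) :
    (X - C (c j)) ^ N ∣ lagrangeFactor c N i :=
  Finset.dvd_prod_of_mem _ (by simpa using hji)

theorem map_lagrangeFactor (τ : K →+* K) {c : ι → K} {σ : ι → ι} (hσ : Function.Involutive σ)
    (hc : ∀ i, c (σ i) = τ (c i)) (N : ℕ) (i : ι) :
    (lagrangeFactor c N i).map τ = lagrangeFactor c N (σ i) := by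
  simp only [lagrangeFactor, Polynomial.map_prod, Polynomial.map_pow, Polynomial.map_sub,
    map_X, map_C, ← hc]
  exact Finset.prod_equiv (hσ.toPerm σ) (by simp [hσ.injective.eq_iff]) (by simp)

theorem aeval_mem_of_pow_dvd {A : Type*} [CommRing A] [Algebra K A] {I : Ideal A} {F : A}
    {a : K} {N : ℕ} (hF : (F - algebraMap K A a) ^ N ∈ I) {P : K[X]} (hP : (X - C a) ^ N ∣ P) :
    aeval F P ∈ I :=
  I.mem_of_dvd (by simpa using _root_.map_dvd (aeval F) hP) hF

theorem exists_map_ofReal_eq_of_map_conj_eq {P : ℂ[X]} (hP : P.map (starRingEnd ℂ) = P) :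
    ∃ Q : ℝ[X], Q.map (algebraMap ℝ ℂ) = P := by
  refine (mem_lifts P).1 ((lifts_iff_coeff_lifts P).2 fun n => ?_)
  obtain ⟨a, ha⟩ := Complex.conj_eq_iff_real.1
    (by rw [← coeff_map, hP] : starRingEnd ℂ (P.coeff n) = P.coeff n)
  exact ⟨a, ha.symm⟩

theorem aeval_map_algebraMap_real {σ : Type*} (f : MvPolynomial σ ℝ) (Q : ℝ[X]) :
    aeval (MvPolynomial.map (algebraMap ℝ ℂ) f) (Q.map (algebraMap ℝ ℂ)) =
      MvPolynomial.map (algebraMap ℝ ℂ) (aeval f Q) := by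
  rw [aeval_map_algebraMap]
  simpa using aeval_algHom_apply (MvPolynomial.mapAlgHom (Algebra.ofId ℝ ℂ)) f Q

theorem exists_sum_mul_lagrangeFactor_eq_one_of_conj [Nonempty ι] {c : ι → ℂ}
    (hc : Function.Injective c) {σ : ι → ι} (hσ : Function.Involutive σ)
    (hcσ : ∀ i, c (σ i) = starRingEnd ℂ (c i)) (N : ℕ) :
    ∃ ν : ι → ℂ[X], ∑ i, ν i * lagrangeFactor c N i = 1 ∧
      ∀ i, σ i = i → ∃ Q : ℝ[X], Q.map (algebraMap ℝ ℂ) = ν i * lagrangeFactor c N i := by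
  have hconj : Function.Involutive (mapRingHom (starRingEnd ℂ)) := fun P => by
    simp [Polynomial.map_map]
  obtain ⟨μ, hμ⟩ := exists_sum_mul_lagrangeFactor_eq_one hc N
  obtain ⟨ν, hν, hνσ⟩ :=
    exists_sum_mul_eq_one_of_map_eq _ hconj hσ (map_lagrangeFactor _ hσ hcσ N) hμ
  refine ⟨ν, hν, fun i hi => exists_map_ofReal_eq_of_map_conj_eq ?_⟩
  simpa [hi] using congrArg₂ (· * ·) (hνσ i) (map_lagrangeFactor _ hσ hcσ N i)

end Polynomial

theorem mem_radical_extC_of_forall_eval_eq_zero {σ : Type*} [Finite σ]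
    {I : Ideal (MvPolynomial σ ℝ)} {g : MvPolynomial σ ℂ} (hg : ∀ z ∈ cZeros I, eval z g = 0) :
    g ∈ (extC I).radical := by
  rw [← vanishingIdeal_zeroLocus_eq_radical (K := ℂ), mem_vanishingIdeal_iff]
  exact fun z hz => hg z fun p hp => hz _ (Ideal.mem_map_of_mem _ hp)

theorem lagrange_polynomials_of_decomposition_general (f : MvPolynomial (Fin n) ℝ)
    (J : Ideal (MvPolynomial (VarsZ n n1 n2) ℝ))
    (s : ℕ) (J' : Fin (s + 1) → Ideal (MvPolynomial (VarsZ n n1 n2) ℝ))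
    (fval : Fin (s + 1) → ℂ) (r : ℤ)
    (hconst : ∀ i, ∀ z ∈ cZeros (J' i), evalC f (z ∘ Sum.inl) = fval i)
    (hinj : Function.Injective fval)
    (hreal : ∀ i : Fin (s + 1), (i : ℤ) ≤ r → ∃ a : ℝ, fval i = (a : ℂ))
    (hconj : ∀ i : Fin (s + 1), r < (i : ℤ) →
      ∃ j : Fin (s + 1), r < (j : ℤ) ∧ fval j = starRingEnd ℂ (fval i)) :
    ∃ p : Fin (s + 1) → MvPolynomial (Fin n) ℂ,
      (1 - ∑ i, rename Sum.inl (p i) ∈ extC J) ∧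
      (∀ i, ∀ j, j ≠ i →
        (rename Sum.inl (p i) : MvPolynomial (VarsZ n n1 n2) ℂ) ∈ extC (J' j)) ∧
      (∀ i : Fin (s + 1), (i : ℤ) ≤ r →
        ∃ q : MvPolynomial (Fin n) ℝ, p i = MvPolynomial.map (algebraMap ℝ ℂ) q) := by
  classical
  set fC := MvPolynomial.map (algebraMap ℝ ℂ) f
  obtain ⟨N, hN⟩ : ∃ N, ∀ j, (rename Sum.inl fC - C (fval j)) ^ N ∈ extC (J' j) :=
    Ideal.exists_pow_mem_of_forall_mem_radical fun j => mem_radical_extC_of_forall_eval_eq_zero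
      fun z hz => by simpa [evalC, fC, sub_eq_zero, eval_rename] using hconst j z hz
  obtain ⟨σ, hσ, hfσ⟩ := hinj.exists_involutive_comp_eq Complex.conj_conj fun i => by
    rcases le_or_gt (i : ℤ) r with hi | hi
    · obtain ⟨a, ha⟩ := hreal i hi
      exact ⟨i, by rw [ha, Complex.conj_ofReal]⟩
    · exact (hconj i hi).imp fun _ => And.right
  obtain ⟨ν, hν, hν_real⟩ :=
    Polynomial.exists_sum_mul_lagrangeFactor_eq_one_of_conj hinj hσ hfσ N
  refine ⟨fun i => Polynomial.aeval fC (ν i * Polynomial.lagrangeFactor fval N i), ?_,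
    fun i j hji => ?_, fun i hi => ?_⟩
  · simp only [← map_sum, hν, map_one, sub_self]
    exact zero_mem _
  · rw [← Polynomial.aeval_algHom_apply]
    exact Polynomial.aeval_mem_of_pow_dvd (hN j)
      (dvd_mul_of_dvd_right (Polynomial.pow_dvd_lagrangeFactor fval N hji) _)
  · have hσi : σ i = i := by
      obtain ⟨a, ha⟩ := hreal i hi
      exact hinj (by rw [hfσ, ha, Complex.conj_ofReal])
    obtain ⟨Q, hQ⟩ := hν_real i hσi
    exact ⟨Polynomial.aeval f Q, by
      simp only [← hQ]
      exact Polynomial.aeval_map_algebraMap_real f Q⟩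

/-- **Lagrange-type partition of unity.** In the setting of the
decomposition `J = J_0 ∩ ⋯ ∩ J_s` of an ideal of ℝ[z] with complex zero set V_grad,
there exist polynomials `p_0, …, p_s ∈ ℂ[x]` with `1 − Σ p_i` in the extension of `J` to
ℂ[z], `p_i` in the extension of `J_j` for all `j ≠ i`, and `p_i` having real coefficients
for `i = 0,…,r`. -/
theorem lagrange_polynomials_of_decomposition (f : MvPolynomial (Fin n) ℝ)
    (g0 : Fin n1 → MvPolynomial (Fin n) ℝ) (gp : Fin n2 → MvPolynomial (Fin n) ℝ)
    (J : Ideal (MvPolynomial (VarsZ n n1 n2) ℝ))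
    (hJ : cZeros J = cZeros (Igrad f g0 gp))
    (s : ℕ) (J' : Fin (s + 1) → Ideal (MvPolynomial (VarsZ n n1 n2) ℝ))
    (fval : Fin (s + 1) → ℂ) (r : ℤ) (hr1 : -1 ≤ r) (hr2 : r ≤ (s : ℤ))
    (hdec : J = ⨅ i, J' i)
    (hconst : ∀ i, ∀ z ∈ cZeros (J' i), evalC f (z ∘ Sum.inl) = fval i)
    (hinj : Function.Injective fval)
    (hreal : ∀ i : Fin (s + 1), (i : ℤ) ≤ r → ∃ a : ℝ, fval i = (a : ℂ))
    (hconj : ∀ i : Fin (s + 1), r < (i : ℤ) →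
      ∃ j : Fin (s + 1), r < (j : ℤ) ∧ fval j = starRingEnd ℂ (fval i)) :
    ∃ p : Fin (s + 1) → MvPolynomial (Fin n) ℂ,
      (1 - ∑ i, rename Sum.inl (p i) ∈ extC J) ∧
      (∀ i, ∀ j, j ≠ i →
        (rename Sum.inl (p i) : MvPolynomial (VarsZ n n1 n2) ℂ) ∈ extC (J' j)) ∧
      (∀ i : Fin (s + 1), (i : ℤ) ≤ r →
        ∃ q : MvPolynomial (Fin n) ℝ, p i = MvPolynomial.map (algebraMap ℝ ℂ) q) :=
  lagrange_polynomials_of_decomposition_general f J s J' fval r hconst hinj hreal hconj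

end
end

section
/- Let J be an ideal of ℝ[z_1,…,z_N], let f ∈ ℝ[x_1,…,x_n] where x_1,…,x_n is a subset of the variables z_1,…,z_N, and suppose f takes the constant value f* on the complex zero set V_ℂ(J) ⊆ ℂ^N, where f* ∈ ℝ and f* ≥ 0. Then there exists t ∈ ℕ such that for every ε > 0 there exists q ∈ ℝ[x_1,…,x_n] with deg q ≤ t and f + ε − q² ∈ J. -/
/-!
Since `f` is constant on `V_ℂ(J)`, the Nullstellensatz puts `g = f - f*` in the radical of `J`,
say `g ^ k ∈ J`. For `c = f* + ε > 0`, truncating the Taylor series of `√(c + X)` gives `Q` with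
`deg Q ≤ k` and `Q ^ 2 ≡ c + X` modulo `X ^ (k + 1)`; its coefficients are found one at a time,
each from a linear equation with leading coefficient `2 √c ≠ 0`. Then `q = Q(g)` satisfies
`f + ε - q ^ 2 ∈ (g ^ (k + 1)) ⊆ J`, and `deg q ≤ k · deg g` does not depend on `ε`.
-/

namespace Polynomial

theorem exists_natDegree_le_X_pow_dvd_sub_sq {K : Type*} [Field K] [NeZero (2 : K)]
    {p : K[X]} {a : K} (ha : a ≠ 0) (hp : p.coeff 0 = a ^ 2) (k : ℕ) :
    ∃ Q : K[X], Q.natDegree ≤ k ∧ Q.coeff 0 = a ∧ X ^ (k + 1) ∣ p - Q ^ 2 := by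
  induction k with
  | zero =>
    refine ⟨C a, by simp, by simp, ?_⟩
    rw [zero_add, pow_one, X_dvd_iff, coeff_sub, ← C_pow, coeff_C_zero, hp, sub_self]
  | succ k ih =>
    obtain ⟨Q, hdeg, hQ0, R, hR⟩ := ih
    set b := R.coeff 0 / (2 * a)
    refine ⟨Q + C b * X ^ (k + 1), ?_, ?_, ?_⟩
    · exact natDegree_add_le_of_degree_le (hdeg.trans k.le_succ)
        (natDegree_C_mul_X_pow_le b _)
    · simp [hQ0]
    · have hstep : p - (Q + C b * X ^ (k + 1)) ^ 2
          = X ^ (k + 1) * (R - C (2 * b) * Q - C (b ^ 2) * X ^ (k + 1)) := by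
        simp only [map_mul, map_pow, map_ofNat]
        linear_combination hR
      obtain ⟨T, hT⟩ : X ∣ R - C (2 * b) * Q - C (b ^ 2) * X ^ (k + 1) := by
        rw [X_dvd_iff]
        simp only [coeff_sub, coeff_C_mul, hQ0, coeff_X_pow, b]
        field_simp
        simp
      exact ⟨T, by rw [hstep, hT]; ring⟩

theorem aeval_mem_of_X_pow_dvd {R A : Type*} [CommSemiring R] [CommSemiring A] [Algebra R A]
    {I : Ideal A} {x : A} {n : ℕ} (hx : x ^ n ∈ I) {F : R[X]} (hF : X ^ n ∣ F) :
    aeval x F ∈ I := by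
  obtain ⟨G, rfl⟩ := hF
  simpa using I.mul_mem_right (aeval x G) hx

end Polynomial

namespace MvPolynomial

theorem totalDegree_aeval_le {R σ : Type*} [CommSemiring R] (g : MvPolynomial σ R)
    (Q : Polynomial R) : (Polynomial.aeval g Q).totalDegree ≤ Q.natDegree * g.totalDegree := by
  rw [Polynomial.aeval_eq_sum_range]
  refine (totalDegree_finsetSum _ _).trans (Finset.sup_le fun i hi => ?_)
  calc (Q.coeff i • g ^ i).totalDegree ≤ (g ^ i).totalDegree := totalDegree_smul_le _ _
    _ ≤ i * g.totalDegree := totalDegree_pow _ _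
    _ ≤ Q.natDegree * g.totalDegree :=
      Nat.mul_le_mul_right _ (Finset.mem_range_succ_iff.mp hi)

theorem mem_radical_of_forall_eval_map_eq_zero {k K σ : Type*} [Field k] [Field K] [Algebra k K]
    [IsAlgClosed K] [Finite σ] {I : Ideal (MvPolynomial σ k)} {p : MvPolynomial σ k}
    (h : ∀ z : σ → K, (∀ q ∈ I, eval z (map (algebraMap k K) q) = 0) →
      eval z (map (algebraMap k K) p) = 0) :
    p ∈ I.radical := by
  rw [← vanishingIdeal_zeroLocus_eq_radical (K := K), mem_vanishingIdeal_iff]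
  intro z hz
  simpa [eval_map, aeval_def] using h z fun q hq => by simpa [eval_map, aeval_def] using hz q hq

end MvPolynomial

open MvPolynomial

/-- Let `J` be an ideal of `ℝ[z_1,…,z_N]`, and let
`f ∈ ℝ[x_1,…,x_n]`, where the variables `x` are embedded into the variables `z` by an
injection `ι`. Suppose `f` takes the constant value `f* ∈ ℝ`, `f* ≥ 0`, on the complex
zero set of `J`. Then there is a `t ∈ ℕ` such that for every `ε > 0` there is a
`q ∈ ℝ[x_1,…,x_n]` with `deg q ≤ t` and `f + ε − q² ∈ J`. -/
theorem exists_degree_bound_sqrt_approx {N n : ℕ}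
    (J : Ideal (MvPolynomial (Fin N) ℝ)) (ι : Fin n ↪ Fin N)
    (f : MvPolynomial (Fin n) ℝ) (fstar : ℝ) (hfstar : 0 ≤ fstar)
    (hconst : ∀ z : Fin N → ℂ,
      (∀ p ∈ J, eval z (MvPolynomial.map (algebraMap ℝ ℂ) p) = 0) →
      eval z (MvPolynomial.map (algebraMap ℝ ℂ) (rename ι f)) = (fstar : ℂ)) :
    ∃ t : ℕ, ∀ ε : ℝ, 0 < ε → ∃ q : MvPolynomial (Fin n) ℝ,
      q.totalDegree ≤ t ∧
      rename ι f + C ε - (rename ι q) ^ 2 ∈ J := by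
  set g := f - C fstar
  obtain ⟨k, hk⟩ : rename ι g ∈ J.radical :=
    mem_radical_of_forall_eval_map_eq_zero (K := ℂ) fun z hz => by simp [g, hconst z hz]
  refine ⟨k * g.totalDegree, fun ε hε => ?_⟩
  have hc : 0 < fstar + ε := by linarith
  obtain ⟨Q, hdeg, -, hdvd⟩ := Polynomial.exists_natDegree_le_X_pow_dvd_sub_sq
    (p := .X + .C (fstar + ε)) (Real.sqrt_pos.2 hc).ne' (by simp [Real.sq_sqrt hc.le]) k
  refine ⟨Polynomial.aeval g Q, (totalDegree_aeval_le g Q).trans (by gcongr), ?_⟩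
  convert Polynomial.aeval_mem_of_X_pow_dvd (J.pow_mem_of_pow_mem hk k.le_succ) hdvd using 1
  rw [← Polynomial.aeval_algHom_apply]
  simp [g]
  ring
end

section
/- Let C = (C^0; C^+) be a set of constraints in ℝ[x]. There exists t_0 ∈ ℕ such that for all t ≥ t_0 and all Λ ∈ L_t(C), the C^+-radical √[C^+]{C^0} is contained in the ideal (ker M_Λ^t) of ℝ[x] generated by the kernel of the truncated Hankel operator of Λ. -/
/-!
Nonnegativity of `Λ` on `P_t(C)` makes `(a, b) ↦ Λ (a * b)` positive semidefinite on polynomials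
of degree `≤ t`, so by Cauchy–Schwarz `Λ (s ^ 2) = 0` puts `s` into `ker M_Λ^t`, and descending
through `(s ^ k) ^ 2 = s ^ (k + 1) * s ^ (k - 1)` so does `Λ (s ^ (2 * m)) = 0`. For `s` in the
radical, a certificate `s ^ (2 * m) + q ∈ (C^0)` with `q ∈ P^+(C)` lies in `P_t(C)` together with
its negative once `t` exceeds its degrees, whence `Λ (s ^ (2 * m)) = -Λ q ≤ 0`. As `ℝ[x]` is
Noetherian, finitely many elements of the radical generate the ideal it spans, and `t_0` is the
largest of their bounds.
-/

open MvPolynomial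

noncomputable section

variable {n : ℕ}

/-- A sum of squares of polynomials. -/
def IsSOS {σ : Type*} (p : MvPolynomial σ ℝ) : Prop :=
  ∃ (k : ℕ) (q : Fin k → MvPolynomial σ ℝ), p = ∑ i, q i ^ 2

/-- Product (c_1^+)^{ε_1} ⋯ (c_l^+)^{ε_l}. -/
def prodEps {l : ℕ} (cp : Fin l → MvPolynomial (Fin n) ℝ) (ε : Fin l → Bool) :
    MvPolynomial (Fin n) ℝ :=
  ∏ j, if ε j then cp j else 1

/-- Membership of the preordering P^+(C) generated by the nonnegativity constraints. -/
def InPreorderPos {l : ℕ} (cp : Fin l → MvPolynomial (Fin n) ℝ)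
    (p : MvPolynomial (Fin n) ℝ) : Prop :=
  ∃ σs : (Fin l → Bool) → MvPolynomial (Fin n) ℝ,
    (∀ ε, IsSOS (σs ε)) ∧ p = ∑ ε, σs ε * prodEps cp ε

/-- Membership of the truncated preordering P_t(C). -/
def InTruncPre {l1 l2 : ℕ} (t : ℕ) (c0 : Fin l1 → MvPolynomial (Fin n) ℝ)
    (cp : Fin l2 → MvPolynomial (Fin n) ℝ) (p : MvPolynomial (Fin n) ℝ) : Prop :=
  ∃ (h : Fin l1 → MvPolynomial (Fin n) ℝ) (σs : (Fin l2 → Bool) → MvPolynomial (Fin n) ℝ),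
    (∀ i, (h i * c0 i).totalDegree ≤ 2 * t) ∧
    (∀ ε, IsSOS (σs ε)) ∧
    (∀ ε, (σs ε * prodEps cp ε).totalDegree ≤ 2 * t) ∧
    p = ∑ i, h i * c0 i + ∑ ε, σs ε * prodEps cp ε

/-- Membership of L_t(C): linear forms with Λ(1) = 1 that are nonnegative on P_t(C). -/
def MemL {l1 l2 : ℕ} (t : ℕ) (c0 : Fin l1 → MvPolynomial (Fin n) ℝ)
    (cp : Fin l2 → MvPolynomial (Fin n) ℝ)
    (Λ : MvPolynomial (Fin n) ℝ →ₗ[ℝ] ℝ) : Prop :=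
  Λ 1 = 1 ∧ ∀ p, InTruncPre t c0 cp p → 0 ≤ Λ p

/-- Kernel of the truncated Hankel operator M_Λ^t. -/
def kerM (t : ℕ) (Λ : MvPolynomial (Fin n) ℝ →ₗ[ℝ] ℝ) : Set (MvPolynomial (Fin n) ℝ) :=
  {p | p.totalDegree ≤ t ∧ ∀ q : MvPolynomial (Fin n) ℝ, q.totalDegree ≤ t → Λ (p * q) = 0}

/-- Membership of the C^+-radical of C^0. -/
def InCplusRadical {l1 l2 : ℕ} (c0 : Fin l1 → MvPolynomial (Fin n) ℝ)
    (cp : Fin l2 → MvPolynomial (Fin n) ℝ) (p : MvPolynomial (Fin n) ℝ) : Prop :=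
  ∃ m : ℕ, 1 ≤ m ∧ ∃ q : MvPolynomial (Fin n) ℝ,
    InPreorderPos cp q ∧ p ^ (2 * m) + q ∈ Ideal.span (Set.range c0)

section Positivity

variable {A : Type*} [CommSemiring A] [Algebra ℝ A] {Λ : A →ₗ[ℝ] ℝ} {V : Submodule ℝ A}

-- Cauchy–Schwarz for the form `(a, b) ↦ Λ (a * b)`, positive semidefinite on `V`.
lemma map_mul_eq_zero_of_map_sq_eq_zero (hpos : ∀ p ∈ V, 0 ≤ Λ (p ^ 2)) {a b : A}
    (ha : a ∈ V) (hb : b ∈ V) (h0 : Λ (a ^ 2) = 0) : Λ (a * b) = 0 := by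
  have hlin : ∀ r : ℝ, 0 ≤ 2 * r * Λ (a * b) + Λ (b ^ 2) := by
    intro r
    have hexp : (r • a + b) ^ 2 = r • (r • a ^ 2) + (2 * r) • (a * b) + b ^ 2 := by
      simp only [Algebra.smul_def, map_mul, map_ofNat]
      ring
    simpa [hexp, h0] using hpos _ (V.add_mem (V.smul_mem r ha) hb)
  by_contra hne
  have hr : 2 * (-(Λ (b ^ 2) + 1) / (2 * Λ (a * b))) * Λ (a * b) = -(Λ (b ^ 2) + 1) := by
    field_simp
  linarith [hlin (-(Λ (b ^ 2) + 1) / (2 * Λ (a * b)))]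

lemma map_sq_eq_zero_of_map_pow_sq_eq_zero (hpos : ∀ p ∈ V, 0 ≤ Λ (p ^ 2)) {s : A} {m : ℕ}
    (hV : ∀ k ≤ m + 1, s ^ k ∈ V) (h0 : Λ ((s ^ (m + 1)) ^ 2) = 0) : Λ (s ^ 2) = 0 := by
  induction m with
  | zero => simpa using h0
  | succ m ih =>
    refine ih (fun k hk => hV k (by omega)) ?_
    have hsplit : (s ^ (m + 1)) ^ 2 = s ^ (m + 2) * s ^ m := by ring
    rw [hsplit]
    exact map_mul_eq_zero_of_map_sq_eq_zero hpos (hV _ le_rfl) (hV _ (by omega)) h0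

end Positivity

variable {l1 l2 t : ℕ} {c0 : Fin l1 → MvPolynomial (Fin n) ℝ}
  {cp : Fin l2 → MvPolynomial (Fin n) ℝ} {Λ : MvPolynomial (Fin n) ℝ →ₗ[ℝ] ℝ}

lemma inTruncPre_sum_mul_c0 {h : Fin l1 → MvPolynomial (Fin n) ℝ}
    (hdeg : ∀ i, (h i * c0 i).totalDegree ≤ 2 * t) :
    InTruncPre t c0 cp (∑ i, h i * c0 i) :=
  ⟨h, 0, hdeg, fun _ => ⟨0, 0, by simp⟩, by simp, by simp⟩

lemma inTruncPre_sum_mul_prodEps {σs : (Fin l2 → Bool) → MvPolynomial (Fin n) ℝ}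
    (hσ : ∀ ε, IsSOS (σs ε)) (hdeg : ∀ ε, (σs ε * prodEps cp ε).totalDegree ≤ 2 * t) :
    InTruncPre t c0 cp (∑ ε, σs ε * prodEps cp ε) :=
  ⟨0, σs, by simp, hσ, hdeg, by simp⟩

lemma inTruncPre_sq {p : MvPolynomial (Fin n) ℝ} (hp : p.totalDegree ≤ t) :
    InTruncPre t c0 cp (p ^ 2) := by
  have hsum : ∑ ε, (Pi.single (fun _ => false) (p ^ 2) : (Fin l2 → Bool) → MvPolynomial (Fin n) ℝ) ε
      * prodEps cp ε = p ^ 2 := by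
    rw [Fintype.sum_eq_single (fun _ => false) fun ε hε => by simp [hε]]
    simp [prodEps]
  rw [← hsum]
  refine inTruncPre_sum_mul_prodEps (fun ε => ?_) (fun ε => ?_)
  · by_cases hε : ε = fun _ => false
    · subst hε; exact ⟨1, fun _ => p, by simp⟩
    · simp only [Pi.single_apply, hε, if_false]; exact ⟨0, 0, by simp⟩
  · by_cases hε : ε = fun _ => false
    · subst hε
      simpa [prodEps] using (totalDegree_pow p 2).trans (by omega)
    · simp [hε]

namespace MemL

lemma map_sq_nonneg (hΛ : MemL t c0 cp Λ) :
    ∀ p ∈ restrictTotalDegree (Fin n) ℝ t, 0 ≤ Λ (p ^ 2) :=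
  fun _ hp => hΛ.2 _ (inTruncPre_sq ((mem_restrictTotalDegree _ _ _).1 hp))

lemma map_sum_mul_c0 (hΛ : MemL t c0 cp Λ) {h : Fin l1 → MvPolynomial (Fin n) ℝ}
    (hdeg : ∀ i, (h i * c0 i).totalDegree ≤ 2 * t) : Λ (∑ i, h i * c0 i) = 0 := by
  have hneg : InTruncPre t c0 cp (-∑ i, h i * c0 i) := by
    simpa only [← Finset.sum_neg_distrib, ← neg_mul] using
      inTruncPre_sum_mul_c0 (h := fun i => -h i) (by simpa only [neg_mul, totalDegree_neg])
  have hnegpos := hΛ.2 _ hneg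
  rw [map_neg] at hnegpos
  exact le_antisymm (by linarith) (hΛ.2 _ (inTruncPre_sum_mul_c0 hdeg))

end MemL

open Filter in
lemma InCplusRadical.eventually_mem_kerM {s : MvPolynomial (Fin n) ℝ}
    (hs : InCplusRadical c0 cp s) :
    ∀ᶠ t in atTop, ∀ Λ : MvPolynomial (Fin n) ℝ →ₗ[ℝ] ℝ, MemL t c0 cp Λ → s ∈ kerM t Λ := by
  obtain ⟨m, hm, _, ⟨σs, hσ, rfl⟩, hmem⟩ := hs
  obtain ⟨h, hrep⟩ := Ideal.mem_span_range_iff_exists_fun.mp hmem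
  obtain ⟨m, rfl⟩ : ∃ k, m = k + 1 := ⟨m - 1, by omega⟩
  filter_upwards [eventually_ge_atTop ((m + 1) * s.totalDegree),
    eventually_all.2 fun i => eventually_ge_atTop (h i * c0 i).totalDegree,
    eventually_all.2 fun ε => eventually_ge_atTop (σs ε * prodEps cp ε).totalDegree]
    with t hst hht hσt Λ hΛ
  set V := restrictTotalDegree (Fin n) ℝ t
  have hpowV : ∀ k ≤ m + 1, s ^ k ∈ V := fun k hk =>
    (mem_restrictTotalDegree _ _ _).2 <| (totalDegree_pow s k).trans <|
      (Nat.mul_le_mul_right _ hk).trans hst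
  have hsV : s ∈ V := by simpa using hpowV 1 (by omega)
  have hpos := hΛ.map_sq_nonneg
  have hcert : Λ ((s ^ (m + 1)) ^ 2) + Λ (∑ ε, σs ε * prodEps cp ε) = 0 := by
    rw [← pow_mul, mul_comm, ← map_add, ← hrep]
    exact hΛ.map_sum_mul_c0 fun i => (hht i).trans (by omega)
  have hσpos := hΛ.2 _ (inTruncPre_sum_mul_prodEps hσ fun ε => (hσt ε).trans (by omega))
  have htop : Λ ((s ^ (m + 1)) ^ 2) = 0 := le_antisymm (by linarith) (hpos _ (hpowV _ le_rfl))
  have hsq := map_sq_eq_zero_of_map_pow_sq_eq_zero hpos hpowV htop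
  exact ⟨(mem_restrictTotalDegree _ _ _).1 hsV, fun q hq =>
    map_mul_eq_zero_of_map_sq_eq_zero hpos hsV ((mem_restrictTotalDegree _ _ _).2 hq) hsq⟩

/-- For any set of constraints `C = (C^0; C^+)` there is a `t_0` such
that for every `t ≥ t_0` and every `Λ ∈ L_t(C)`, the `C^+`-radical `√[C^+]{C^0}` is
contained in the ideal generated by the kernel of the truncated Hankel operator of `Λ`. -/
theorem Cplus_radical_subset_ideal_kernel_hankel
    {l1 l2 : ℕ} (c0 : Fin l1 → MvPolynomial (Fin n) ℝ)
    (cp : Fin l2 → MvPolynomial (Fin n) ℝ) :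
    ∃ t0 : ℕ, ∀ t : ℕ, t0 ≤ t →
      ∀ Λ : MvPolynomial (Fin n) ℝ →ₗ[ℝ] ℝ, MemL t c0 cp Λ →
        ∀ p : MvPolynomial (Fin n) ℝ, InCplusRadical c0 cp p →
          p ∈ Ideal.span (kerM t Λ) := by
  obtain ⟨S, hSrad, hspan⟩ := (Submodule.fg_span_iff_fg_span_finset_subset
    {p | InCplusRadical c0 cp p}).1 (IsNoetherian.noetherian (Ideal.span _))
  obtain ⟨t0, ht0⟩ := Filter.eventually_atTop.1 <|
    (Filter.eventually_all_finset S).2 fun s hs => InCplusRadical.eventually_mem_kerM (hSrad hs)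
  refine ⟨t0, fun t ht Λ hΛ p hp => ?_⟩
  have hpS : p ∈ Ideal.span (S : Set (MvPolynomial (Fin n) ℝ)) := by
    rw [Ideal.span, ← hspan]
    exact Submodule.subset_span hp
  exact Ideal.span_mono (fun s hs => ht0 t ht s hs Λ hΛ) hpS

end
end
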